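/- arXiv:2404.08193 — 9 statements merged into one kernel-verified Lean document; each statement's English description precedes it below -/
import Mathlib

section
/- Let k, d, b, n* be positive integers and N a nonnegative integer. Suppose that for every integer j with d ≤ j < b + d, the number n* is (j,k)-representable, and suppose that every integer n > N can be written as a sum of at most b positive k-th powers (i.e., n is (s,k)-representable for some s with 1 ≤ s ≤ b). Then every integer n > N + n* is (b+d, k)-representable. -/
theorem isRepr_add {m m' j j' k : ℕ}
    (h : ∃ a : Fin j → ℕ, (∀ i, 0 < a i) ∧ ∑ i, (a i) ^ k = m)
    (h' : ∃ a : Fin j' → ℕ, (∀ i, 0 < a i) ∧ ∑ i, (a i) ^ k = m') :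
    ∃ a : Fin (j + j') → ℕ, (∀ i, 0 < a i) ∧ ∑ i, (a i) ^ k = m + m' := by
  obtain ⟨a, ha, hs⟩ := h
  obtain ⟨a', ha', hs'⟩ := h'
  refine ⟨Fin.append a a', ?_, ?_⟩
  · intro i
    refine Fin.addCases (fun i => ?_) (fun i => ?_) i
    · simpa using ha i
    · simpa using ha' i
  · rw [Fin.sum_univ_add]
    simp [hs, hs']


/-- A positive integer `n` is `(j,k)`-representable if it is a sum of exactly `j`
positive `k`-th powers. -/
def IsRepr (n j k : ℕ) : Prop :=
  ∃ a : Fin j → ℕ, (∀ i, 0 < a i) ∧ ∑ i, (a i) ^ k = n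

/-- if `n*` is `(j,k)`-representable for all `d ≤ j < b + d`, and every
integer `n > N` is a sum of at most `b` positive `k`-th powers, then every integer
`n > N + n*` is `(b + d, k)`-representable. -/
theorem stmt_0 (k d b nstar : ℕ) (N : ℕ)
    (hk : 0 < k) (hd : 0 < d) (hb : 0 < b) (hnstar : 0 < nstar)
    (hrep : ∀ j : ℕ, d ≤ j → j < b + d → IsRepr nstar j k)
    (hwaring : ∀ n : ℕ, N < n → ∃ s : ℕ, 1 ≤ s ∧ s ≤ b ∧ IsRepr n s k) :
    ∀ n : ℕ, N + nstar < n → IsRepr n (b + d) k := by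
  intro n hn
  have hNn : N < n - nstar := by omega
  obtain ⟨s, hs1, hsb, hrepn⟩ := hwaring (n - nstar) hNn
  have hj : d ≤ b + d - s ∧ b + d - s < b + d := by omega
  have hstar := hrep (b + d - s) hj.1 hj.2
  have hsum := isRepr_add hrepn hstar
  have heq : s + (b + d - s) = b + d := by omega
  rw [heq] at hsum
  have : n - nstar + nstar = n := by omega
  rw [this] at hsum
  exact hsum
end

section
/- Let j, k, a, n be positive integers and N an integer. Suppose that every integer m with n < m < N is (j,k)-representable, and that a^k − (a−1)^k < N − n. Then every integer m' with n + 1 < m' < N + a^k is (j+1, k)-representable. -/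
theorem IsRepr.pow_add {m j k b : ℕ} (h : IsRepr m j k) (hb : 0 < b) :
    IsRepr (b ^ k + m) (j + 1) k := by
  obtain ⟨c, hc, rfl⟩ := h
  refine ⟨Fin.cons b c, Fin.cases hb hc, ?_⟩
  simp [Fin.sum_univ_succ]

theorem add_one_pow_sub_pow_le_add_one_pow_sub_pow {R : Type*} [CommRing R] [LinearOrder R]
    [IsStrictOrderedRing R] (k : ℕ) {x y : R} (hx : 0 ≤ x) (hxy : x ≤ y) :
    (x + 1) ^ k - x ^ k ≤ (y + 1) ^ k - y ^ k := by
  have geom (z : R) : (z + 1) ^ k - z ^ k = ∑ i ∈ Finset.range k, (z + 1) ^ i * z ^ (k - 1 - i) := by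
    simpa using (geom_sum₂_mul (z + 1) z k).symm
  rw [geom, geom]
  have hy : 0 ≤ y := hx.trans hxy
  gcongr

theorem exists_pos_pow_sub_mem_Ioo (k a : ℕ) (ha : 0 < a) {n m N : ℤ} (hlow : n + 1 < m)
    (hhigh : m < N + a ^ k) (hgap : a ^ k - (a - 1) ^ k < N - n) :
    ∃ b : ℕ, 0 < b ∧ m - b ^ k ∈ Set.Ioo n N := by
  classical
  let P : ℕ → Prop := fun b => n + (b : ℤ) ^ k < m
  have hP1 : P 1 := by simpa [P] using hlow
  set b := Nat.findGreatest P a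
  have hb : 1 ≤ b := Nat.le_findGreatest ha hP1
  have hPb : P b := Nat.findGreatest_spec ha hP1
  refine ⟨b, hb, by simp only [P] at hPb; linarith, ?_⟩
  rcases (Nat.findGreatest_le a : b ≤ a).eq_or_lt with hba | hba
  · rw [← hba] at hhigh; linarith
  · have hmax : m ≤ n + ((b : ℤ) + 1) ^ k := by
      have := Nat.findGreatest_is_greatest (P := P) (Nat.lt_succ_self b) hba
      simp only [P, not_lt] at this
      exact_mod_cast this
    have hmono := add_one_pow_sub_pow_le_add_one_pow_sub_pow k (b.cast_nonneg : (0 : ℤ) ≤ b)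
      (show (b : ℤ) ≤ a - 1 by omega)
    rw [sub_add_cancel] at hmono
    linarith

theorem stmt_1_general (j k a n : ℕ) (N : ℤ)
    (ha : 0 < a)
    (hrep : ∀ m : ℕ, (n : ℤ) < m → (m : ℤ) < N → IsRepr m j k)
    (hgap : (a : ℤ) ^ k - ((a : ℤ) - 1) ^ k < N - (n : ℤ)) :
    ∀ m' : ℕ, (n : ℤ) + 1 < (m' : ℤ) → (m' : ℤ) < N + (a : ℤ) ^ k →
      IsRepr m' (j + 1) k := by
  intro m' hlow hhigh
  obtain ⟨b, hb, hlo, hhi⟩ := exists_pos_pow_sub_mem_Ioo k a ha hlow hhigh hgap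
  have hbm : b ^ k ≤ m' := by
    have : ((b ^ k : ℕ) : ℤ) ≤ m' := by push_cast; linarith [n.cast_nonneg (α := ℤ)]
    exact_mod_cast this
  have hrem : ((m' - b ^ k : ℕ) : ℤ) = m' - (b : ℤ) ^ k := by push_cast [hbm]; ring
  have := (hrep (m' - b ^ k) (hrem ▸ hlo) (hrem ▸ hhi)).pow_add hb
  rwa [Nat.add_sub_cancel' hbm] at this

/-- if every integer `m` with `n < m < N` is `(j,k)`-representable and
`a^k - (a-1)^k < N - n`, then every integer `m'` with `n + 1 < m' < N + a^k` is
`(j+1, k)`-representable. -/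
theorem stmt_1 (j k a n : ℕ) (N : ℤ)
    (hj : 0 < j) (hk : 0 < k) (ha : 0 < a) (hn : 0 < n)
    (hrep : ∀ m : ℕ, (n : ℤ) < m → (m : ℤ) < N → IsRepr m j k)
    (hgap : (a : ℤ) ^ k - ((a : ℤ) - 1) ^ k < N - (n : ℤ)) :
    ∀ m' : ℕ, (n : ℤ) + 1 < (m' : ℤ) → (m' : ℤ) < N + (a : ℤ) ^ k →
      IsRepr m' (j + 1) k :=
  stmt_1_general j k a n N ha hrep hgap
end

section
/- Let k be a positive integer. For all integers n ≥ 2 and j ≥ 2, p^k(n, j) ≤ p^k(n+1, j+1); moreover, if n < 2^k · j, then p^k(n, j) = p^k(n+1, j+1). -/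
/-!
Adding a part `1` maps partitions of `n` into `j` `k`-th powers injectively to partitions of
`n + 1` into `j + 1` of them, and its image consists of those partitions containing a part `1`.
A partition of `n + 1` into `j + 1` parts that avoids `1` has all parts at least `2 ^ k`, so
`2 ^ k * (j + 1) ≤ n + 1`; when `n < 2 ^ k * j` there is no such partition and the map is onto.
-/

/-- `powerPartitions k n j` is the number of partitions of `n` into exactly `j` parts,
each of which is a `k`-th power of a positive integer (partitions counted as multisets). -/
noncomputable def powerPartitions (k n j : ℕ) : ℕ :=
  Nat.card {s : Multiset ℕ //
    Multiset.card s = j ∧ (∀ x ∈ s, ∃ a : ℕ, 0 < a ∧ x = a ^ k) ∧ s.sum = n}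

def powerPartitionSet (k n j : ℕ) : Set (Multiset ℕ) :=
  {s | Multiset.card s = j ∧ (∀ x ∈ s, ∃ a : ℕ, 0 < a ∧ x = a ^ k) ∧ s.sum = n}

theorem powerPartitions_eq_ncard (k n j : ℕ) :
    powerPartitions k n j = (powerPartitionSet k n j).ncard :=
  rfl

theorem powerPartitionSet_finite (k n j : ℕ) : (powerPartitionSet k n j).Finite := by
  let toPartition (s : powerPartitionSet k n j) : Nat.Partition n :=
    ⟨s.1, fun hi => by obtain ⟨a, ha, rfl⟩ := s.2.2.1 _ hi; positivity, s.2.2.2⟩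
  have : Function.Injective toPartition := fun s t h =>
    Subtype.ext (congrArg Nat.Partition.parts h)
  exact Set.finite_coe_iff.1 (Finite.of_injective _ this)

theorem cons_one_mem_powerPartitionSet_iff {k n j : ℕ} {s : Multiset ℕ} :
    1 ::ₘ s ∈ powerPartitionSet k (n + 1) (j + 1) ↔ s ∈ powerPartitionSet k n j := by
  have hone : ∃ a : ℕ, 0 < a ∧ 1 = a ^ k := ⟨1, one_pos, (one_pow k).symm⟩
  simp only [powerPartitionSet, Set.mem_ofPred_eq, Multiset.card_cons, Multiset.sum_cons,
    Multiset.forall_mem_cons, hone, true_and, add_left_inj, add_comm 1 s.sum]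

theorem image_cons_one_powerPartitionSet (k n j : ℕ) :
    (1 ::ₘ ·) '' powerPartitionSet k n j = {t ∈ powerPartitionSet k (n + 1) (j + 1) | 1 ∈ t} := by
  ext t
  constructor
  · rintro ⟨s, hs, rfl⟩
    exact ⟨cons_one_mem_powerPartitionSet_iff.2 hs, Multiset.mem_cons_self 1 s⟩
  · rintro ⟨ht, h1⟩
    rw [← Multiset.cons_erase h1] at ht ⊢
    exact ⟨_, cons_one_mem_powerPartitionSet_iff.1 ht, rfl⟩

theorem two_pow_mul_card_le_sum {k : ℕ} {s : Multiset ℕ}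
    (hs : ∀ x ∈ s, ∃ a : ℕ, 0 < a ∧ x = a ^ k) (h1 : 1 ∉ s) :
    2 ^ k * Multiset.card s ≤ s.sum := by
  have hge : ∀ x ∈ s, 2 ^ k ≤ x := by
    intro x hx
    obtain ⟨a, ha, rfl⟩ := hs x hx
    have ha2 : 2 ≤ a := lt_of_le_of_ne ha fun h : 1 = a => h1 (by simpa [← h] using hx)
    exact Nat.pow_le_pow_left ha2 k
  simpa [mul_comm] using Multiset.card_nsmul_le_sum hge

theorem one_mem_of_mem_powerPartitionSet {k n j : ℕ} {t : Multiset ℕ}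
    (ht : t ∈ powerPartitionSet k (n + 1) (j + 1)) (hlt : n < 2 ^ k * j) : 1 ∈ t := by
  obtain ⟨hcard, hpow, hsum⟩ := ht
  by_contra h1
  have := two_pow_mul_card_le_sum hpow h1
  rw [hcard, hsum, Nat.mul_succ] at this
  have : 1 ≤ 2 ^ k := Nat.one_le_two_pow
  omega

theorem stmt_4_general (k : ℕ) (n j : ℕ) :
    powerPartitions k n j ≤ powerPartitions k (n + 1) (j + 1) ∧
      (n < 2 ^ k * j → powerPartitions k n j = powerPartitions k (n + 1) (j + 1)) := by
  have himage : powerPartitions k n j =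
      {t ∈ powerPartitionSet k (n + 1) (j + 1) | 1 ∈ t}.ncard := by
    rw [powerPartitions_eq_ncard, ← image_cons_one_powerPartitionSet,
      Set.ncard_image_of_injective _ fun _ _ => (Multiset.cons_inj_right 1).1]
  rw [himage, powerPartitions_eq_ncard]
  refine ⟨Set.ncard_le_ncard (Set.sep_subset _ _) (powerPartitionSet_finite _ _ _), fun hlt => ?_⟩
  rw [Set.sep_eq_self_iff_mem_true.2 fun t ht => one_mem_of_mem_powerPartitionSet ht hlt]

/-- for `n, j ≥ 2`, `p^k(n, j) ≤ p^k(n+1, j+1)`, with equality whenever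
`n < 2^k · j`. -/
theorem stmt_4 (k : ℕ) (hk : 0 < k) (n j : ℕ) (hn : 2 ≤ n) (hj : 2 ≤ j) :
    powerPartitions k n j ≤ powerPartitions k (n + 1) (j + 1) ∧
      (n < 2 ^ k * j → powerPartitions k n j = powerPartitions k (n + 1) (j + 1)) :=
  stmt_4_general k n j
end

section
/- Let k ≥ 1 and j ≥ 2 be integers. Suppose that every integer n with n ≥ j(2^k − 1) is (j,k)-representable (equivalently, the largest positive integer that is not (j,k)-representable is less than j(2^k − 1)). Then for every positive integer m, m + j is (j,k)-representable if and only if m + j + 1 is (j+1, k)-representable; that is, {n − (j+1) : n > j+1, n not (j+1,k)-representable} = {n − j : n > j, n not (j,k)-representable}. -/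
/-!
Appending a part `1` turns a `(j,k)`-representation of `m + j` into a `(j+1,k)`-representation
of `m + j + 1`. Conversely, a `(j+1,k)`-representation of `m + j + 1` either has a part `1`,
which can be dropped, or has all parts at least `2`; then `m + j + 1 ≥ (j+1) 2^k`, so
`m + j ≥ j (2^k - 1)` and `m + j` is `(j,k)`-representable by hypothesis.
-/

theorem mul_two_pow_le_sum_pow {j : ℕ} (k : ℕ) {a : Fin j → ℕ} (ha : ∀ i, 2 ≤ a i) :
    j * 2 ^ k ≤ ∑ i, a i ^ k :=
  calc j * 2 ^ k = ∑ _i : Fin j, 2 ^ k := by simp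
    _ ≤ ∑ i, a i ^ k := Finset.sum_le_sum fun i _ => Nat.pow_le_pow_left (ha i) k

namespace IsRepr

variable {n j k : ℕ}

theorem succ_add_one (h : IsRepr n j k) : IsRepr (n + 1) (j + 1) k := by
  obtain ⟨a, ha, rfl⟩ := h
  refine ⟨Fin.snoc a 1, Fin.lastCases (by simp) (by simpa using ha), ?_⟩
  simp [Fin.sum_univ_castSucc]

theorem of_succ_of_eq_one {a : Fin (j + 1) → ℕ} (ha : ∀ i, 0 < a i)
    (hsum : ∑ i, a i ^ k = n + 1) {i₀ : Fin (j + 1)} (hi₀ : a i₀ = 1) : IsRepr n j k := by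
  refine ⟨fun i => a (i₀.succAbove i), fun i => ha _, ?_⟩
  rw [Fin.sum_univ_succAbove _ i₀, hi₀, one_pow] at hsum
  change ∑ i, a (i₀.succAbove i) ^ k = n
  omega

theorem of_succ_or_mul_two_pow_le (h : IsRepr (n + 1) (j + 1) k) :
    IsRepr n j k ∨ (j + 1) * 2 ^ k ≤ n + 1 := by
  obtain ⟨a, ha, hsum⟩ := h
  by_cases hone : ∃ i, a i = 1
  · obtain ⟨i₀, hi₀⟩ := hone
    exact Or.inl (of_succ_of_eq_one ha hsum hi₀)
  · push Not at hone
    have htwo : ∀ i, 2 ≤ a i := fun i => by have := ha i; have := hone i; omega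
    exact Or.inr (hsum ▸ mul_two_pow_le_sum_pow k htwo)

end IsRepr

theorem stmt_5_general (k j : ℕ)
    (h : ∀ n : ℕ, j * (2 ^ k - 1) ≤ n → IsRepr n j k) :
    ∀ m : ℕ, 0 < m → (IsRepr (m + j) j k ↔ IsRepr (m + j + 1) (j + 1) k) := by
  intro m _
  refine ⟨IsRepr.succ_add_one, fun hrepr => ?_⟩
  rcases hrepr.of_succ_or_mul_two_pow_le with hdrop | hbig
  · exact hdrop
  · apply h
    have hpow : 0 < 2 ^ k := Nat.two_pow_pos k
    calc j * (2 ^ k - 1) ≤ j * 2 ^ k := Nat.mul_le_mul_left j (Nat.sub_le _ _)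
      _ ≤ m + j := by nlinarith

/-- if every `n ≥ j(2^k - 1)` is `(j,k)`-representable, then for every
positive `m`, `m + j` is `(j,k)`-representable iff `m + j + 1` is `(j+1,k)`-representable. -/
theorem stmt_5 (k j : ℕ) (hk : 1 ≤ k) (hj : 2 ≤ j)
    (h : ∀ n : ℕ, j * (2 ^ k - 1) ≤ n → IsRepr n j k) :
    ∀ m : ℕ, 0 < m → (IsRepr (m + j) j k ↔ IsRepr (m + j + 1) (j + 1) k) :=
  stmt_5_general k j h
end

section
/- Let k ≥ 1 and j₀ ≥ 2 be integers. Suppose that every integer n with n ≥ j₀(2^k − 1) is (j₀, k)-representable. Then for every integer j ≥ j₀ and every positive integer m, m + j is (j,k)-representable if and only if m + j₀ is (j₀, k)-representable; that is, the sets {n − j : n > j, n not (j,k)-representable} coincide for all j ≥ j₀. -/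
lemma isRepr_succ {n j k : ℕ} (h : IsRepr n j k) : IsRepr (n + 1) (j + 1) k := by
  obtain ⟨a, hpos, hsum⟩ := h
  refine ⟨Fin.cons 1 a, ?_, ?_⟩
  · intro i
    refine Fin.cases ?_ ?_ i <;> simp [hpos]
  · simp [Fin.sum_univ_succ, hsum]
    omega

lemma isRepr_remove_one {n j k : ℕ} (a : Fin (j + 1) → ℕ) (hpos : ∀ i, 0 < a i)
    (hsum : ∑ i, (a i) ^ k = n + 1) (p : Fin (j + 1)) (hp : a p = 1) : IsRepr n j k := by
  have key := Fin.sum_univ_succAbove (fun i => (a i) ^ k) p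
  simp only [hp, one_pow] at key
  refine ⟨fun i => a (p.succAbove i), fun i => hpos _, ?_⟩
  show ∑ i : Fin j, a (p.succAbove i) ^ k = n
  omega

/-- if every `n ≥ j₀(2^k - 1)` is `(j₀,k)`-representable, then for every
`j ≥ j₀` and every positive `m`, `m + j` is `(j,k)`-representable iff `m + j₀` is
`(j₀,k)`-representable. -/
theorem stmt_6 (k j₀ : ℕ) (hk : 1 ≤ k) (hj₀ : 2 ≤ j₀)
    (h : ∀ n : ℕ, j₀ * (2 ^ k - 1) ≤ n → IsRepr n j₀ k) :
    ∀ j : ℕ, j₀ ≤ j → ∀ m : ℕ, 0 < m →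
      (IsRepr (m + j) j k ↔ IsRepr (m + j₀) j₀ k) := by
  intro j hj
  induction j, hj using Nat.le_induction with
  | base => intro m _; rfl
  | succ j hj ih =>
    intro m hm
    constructor
    · rintro ⟨a, hpos, hsum⟩
      by_cases hone : ∃ p, a p = 1
      · obtain ⟨p, hp⟩ := hone
        have : IsRepr (m + j) j k := by
          apply isRepr_remove_one a hpos _ p hp
          rw [hsum]; ring
        exact (ih m hm).mp this
      · push_neg at hone
        have h2 : ∀ i, 2 ≤ a i := by
          intro i
          have := hpos i
          have := hone i
          omega
        have hge : (j + 1) * 2 ^ k ≤ m + (j + 1) := by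
          rw [← hsum]
          calc (j + 1) * 2 ^ k = ∑ _i : Fin (j + 1), 2 ^ k := by
                simp [Finset.sum_const, mul_comm]
            _ ≤ ∑ i, (a i) ^ k :=
                Finset.sum_le_sum fun i _ => Nat.pow_le_pow_left (h2 i) k
        have h1 : 1 ≤ 2 ^ k := Nat.one_le_two_pow
        have hm0 : (j + 1) * (2 ^ k - 1) ≤ m := by
          have heq : (j + 1) * (2 ^ k - 1) + (j + 1) = (j + 1) * 2 ^ k := by
            rw [← Nat.mul_succ, Nat.succ_eq_add_one, Nat.sub_add_cancel h1]
          omega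
        have hmj : j₀ * (2 ^ k - 1) ≤ m + j₀ := by
          have : j₀ * (2 ^ k - 1) ≤ (j + 1) * (2 ^ k - 1) :=
            Nat.mul_le_mul_right _ (by omega)
          omega
        exact h _ hmj
    · intro hr
      have : IsRepr (m + j) j k := (ih m hm).mpr hr
      have := isRepr_succ this
      rwa [Nat.add_assoc] at this
end

section
/- Let j and k be positive integers, and for each positive integer i let B_i denote the set of positive integers that are not (i,k)-representable. Suppose B_j is finite and nonempty with maximum element m, that B_{j+1} = {1} ∪ {n + 1 : n ∈ B_j}, and that there is no positive integer b with b^k = m + 1 (equivalently, the integer parts of the k-th roots of m and m+1 coincide). Then B_{j+2} = {1} ∪ {n + 1 : n ∈ B_{j+1}}. -/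
/-- For fixed `k`, `BSet k i` is the set of positive integers that are not
`(i,k)`-representable. -/
def BSet (k i : ℕ) : Set ℕ := {n : ℕ | 0 < n ∧ ¬ IsRepr n i k}

lemma repr_ge {n i k : ℕ} (h : IsRepr n i k) : i ≤ n := by
  obtain ⟨a, ha, hs⟩ := h
  calc i = ∑ _x : Fin i, 1 := by simp
    _ ≤ ∑ x, (a x) ^ k := Finset.sum_le_sum fun x _ => Nat.one_le_pow _ _ (ha x)
    _ = n := hs

lemma repr_cons {r j k : ℕ} (a : ℕ) (ha : 0 < a) (h : IsRepr r j k) :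
    IsRepr (a ^ k + r) (j + 1) k := by
  obtain ⟨b, hb, hs⟩ := h
  refine ⟨Fin.cons a b, ?_, ?_⟩
  · intro i
    refine Fin.cases ha (fun i => hb i) i
  · rw [Fin.sum_univ_succ]
    simp [hs]

/-- if `B_j` is finite and nonempty with maximum `m`,
`B_{j+1} = {1} ∪ {n + 1 : n ∈ B_j}`, and `m + 1` is not a `k`-th power of a positive
integer, then `B_{j+2} = {1} ∪ {n + 1 : n ∈ B_{j+1}}`. -/
theorem stmt_8 (j k m : ℕ) (hj : 0 < j) (hk : 0 < k)
    (hfin : (BSet k j).Finite)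
    (hmem : m ∈ BSet k j) (hmax : ∀ x ∈ BSet k j, x ≤ m)
    (hsucc : BSet k (j + 1) = insert 1 ((· + 1) '' BSet k j))
    (hroot : ¬ ∃ b : ℕ, 0 < b ∧ b ^ k = m + 1) :
    BSet k (j + 2) = insert 1 ((· + 1) '' BSet k (j + 1)) := by
  ext n
  simp only [Set.mem_insert_iff, Set.mem_image]
  constructor
  · rintro ⟨hn, hnr⟩
    by_contra hcon
    push_neg at hcon
    obtain ⟨hn1, hnim⟩ := hcon
    have hn2 : 2 ≤ n := by omega
    -- n - 1 is positive and not in B_{j+1}, hence (j+1)-representable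
    have hnot : n - 1 ∉ BSet k (j + 1) := fun hm => hnim (n - 1) hm (by omega)
    have hrep : IsRepr (n - 1) (j + 1) k := by
      by_contra h
      exact hnot ⟨by omega, h⟩
    have : IsRepr n (j + 2) k := by
      have := repr_cons 1 one_pos hrep
      rw [one_pow] at this
      have hn' : 1 + (n - 1) = n := by omega
      rw [hn'] at this
      exact this
    exact hnr this
  · rintro (rfl | ⟨q, hq, rfl⟩)
    · refine ⟨one_pos, fun h => ?_⟩
      have := repr_ge h
      omega
    · refine ⟨by omega, fun h => ?_⟩
      obtain ⟨a, ha, hs⟩ := h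
      -- split off the first term
      set s : ℕ := ∑ i : Fin (j + 1), (a i.succ) ^ k with hs_def
      have hsplit : q + 1 = (a 0) ^ k + s := by
        rw [← hs, Fin.sum_univ_succ]
      have hsrep : IsRepr s (j + 1) k := ⟨fun i => a i.succ, fun i => ha _, rfl⟩
      have hsge : j + 1 ≤ s := repr_ge hsrep
      have hsnot : s ∉ BSet k (j + 1) := fun hm => hm.2 hsrep
      rw [hsucc] at hsnot
      simp only [Set.mem_insert_iff, Set.mem_image] at hsnot
      push_neg at hsnot
      obtain ⟨hs1, hsim⟩ := hsnot
      have hs2 : 2 ≤ s := by omega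
      have hnot2 : s - 1 ∉ BSet k j := fun hm => hsim (s - 1) hm (by omega)
      have hrep2 : IsRepr (s - 1) j k := by
        by_contra h
        exact hnot2 ⟨by omega, h⟩
      have hq' : IsRepr q (j + 1) k := by
        have := repr_cons (a 0) (ha 0) hrep2
        have hq'' : (a 0) ^ k + (s - 1) = q := by
          have hpos : 1 ≤ (a 0) ^ k := Nat.one_le_pow _ _ (ha 0)
          omega
        rwa [hq''] at this
      exact hq.2 hq'
end

section
/- Let p be an odd prime, and let j, r, n be positive integers with r ≤ p and n < r · p^{p−1}. If n is not congruent to j − t modulo p for any integer t with 0 ≤ t ≤ r − 1, then n is not the sum of exactly j positive (p−1)-th powers. -/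
/-- for an odd prime `p` and positive integers `j, r, n` with `r ≤ p` and
`n < r · p^(p-1)`, if `n` is not congruent to `j - t` modulo `p` for any `0 ≤ t ≤ r - 1`,
then `n` is not the sum of exactly `j` positive `(p-1)`-th powers. -/
theorem stmt_10 (p j r n : ℕ) (hp : p.Prime) (hodd : Odd p)
    (hj : 0 < j) (hr : 0 < r) (hn : 0 < n)
    (hrp : r ≤ p) (hnr : n < r * p ^ (p - 1))
    (hcong : ∀ t : ℕ, t ≤ r - 1 → ¬ ((n : ℤ) ≡ (j : ℤ) - (t : ℤ) [ZMOD p])) :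
    ¬ IsRepr n j (p - 1) := by
  rintro ⟨a, hpos, hsum⟩
  classical
  haveI : Fact p.Prime := ⟨hp⟩
  set S := Finset.univ.filter (fun i : Fin j => p ∣ a i) with hS
  set t := S.card with ht
  have hp1 : 0 < p - 1 := by have := hp.two_le; omega
  have htj : t ≤ j := by
    calc t ≤ Finset.univ.card := Finset.card_le_card (Finset.filter_subset _ _)
    _ = j := Finset.card_univ.trans (Fintype.card_fin j)
  have hlb : t * p ^ (p - 1) ≤ n := by
    calc t * p ^ (p - 1) = ∑ _i ∈ S, p ^ (p - 1) := by
          rw [Finset.sum_const, smul_eq_mul]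
      _ ≤ ∑ i ∈ S, (a i) ^ (p - 1) :=
          Finset.sum_le_sum (fun i hi => by
            have hdvd : p ∣ a i := (Finset.mem_filter.mp hi).2
            exact Nat.pow_le_pow_left (Nat.le_of_dvd (hpos i) hdvd) _)
      _ ≤ ∑ i, (a i) ^ (p - 1) :=
          Finset.sum_le_sum_of_subset (Finset.filter_subset _ _)
      _ = n := hsum
  have htr : t ≤ r - 1 := by
    have : t < r := Nat.lt_of_mul_lt_mul_right (lt_of_le_of_lt hlb hnr)
    omega
  apply hcong t htr
  rw [← ZMod.intCast_eq_intCast_iff]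
  push_cast
  have hzmod : (n : ZMod p) = (j : ZMod p) - (t : ZMod p) := by
    have hcast := congrArg (Nat.cast : ℕ → ZMod p) hsum
    push_cast at hcast
    rw [← hcast, ← Finset.sum_filter_add_sum_filter_not Finset.univ (fun i => p ∣ a i)]
    have h0 : ∑ i ∈ S, ((a i : ZMod p)) ^ (p - 1) = 0 :=
      Finset.sum_eq_zero (fun i hi => by
        have hz : (a i : ZMod p) = 0 :=
          (ZMod.natCast_eq_zero_iff _ _).mpr (Finset.mem_filter.mp hi).2
        rw [hz, zero_pow (by omega)])
    have hcard : (Finset.univ.filter (fun i : Fin j => ¬ p ∣ a i)).card = j - t := by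
      have := Finset.card_filter_add_card_filter_not
        (s := (Finset.univ : Finset (Fin j))) (p := fun i : Fin j => p ∣ a i)
      simp only [Finset.card_univ, Fintype.card_fin, ← hS, ← ht] at this
      omega
    have h1 : ∑ i ∈ Finset.univ.filter (fun i : Fin j => ¬ p ∣ a i),
        ((a i : ZMod p)) ^ (p - 1) = ((j - t : ℕ) : ZMod p) := by
      rw [Finset.sum_congr rfl (fun i hi => ZMod.pow_card_sub_one_eq_one ?_)]
      · rw [Finset.sum_const, hcard, nsmul_eq_mul, mul_one]
      · intro hz
        exact (Finset.mem_filter.mp hi).2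
          ((ZMod.natCast_eq_zero_iff _ _).mp hz)
    rw [h0, h1, zero_add, Nat.cast_sub htj]
  exact hzmod
end

section
/- For every odd prime p and every positive integer j, the number of nonnegative integers n < p^p that are not the sum of exactly j positive (p−1)-th powers is at least p^{p−1}·(p−1)/2. -/
open Finset

lemma ZMod.natCast_pow_eq_ite_of_sub_one_dvd {p k : ℕ} [Fact p.Prime] (hk : k ≠ 0)
    (hpk : p - 1 ∣ k) (a : ℕ) : (a : ZMod p) ^ k = if p ∣ a then 0 else 1 := by
  obtain ⟨m, rfl⟩ := hpk
  have hm : m ≠ 0 := right_ne_zero_of_mul hk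
  rw [pow_mul, ZMod.pow_card_sub_one]
  split_ifs <;> simp_all [ZMod.natCast_eq_zero_iff]

lemma card_filter_range_mul_natCast_eq {p : ℕ} [NeZero p] (m : ℕ) (c : ZMod p) :
    #{n ∈ range (m * p) | ((n : ℕ) : ZMod p) = c} = m := by
  have hc : ∀ n : ℕ, (n : ZMod p) = c ↔ n ≡ c.val [MOD p] := fun n => by
    rw [← ZMod.natCast_eq_natCast_iff, ZMod.natCast_zmod_val]
  simp_rw [hc, ← Nat.count_eq_card_filter_range, Nat.count_modEq_card _ (NeZero.pos p)]
  simp [NeZero.ne p]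

lemma IsRepr.exists_mul_pow_le {p n j k : ℕ} (hp : p.Prime) (hk : k ≠ 0) (hpk : p - 1 ∣ k)
    (h : IsRepr n j k) : ∃ s, s * p ^ k ≤ n ∧ (n : ZMod p) + s = j := by
  have : Fact p.Prime := ⟨hp⟩
  obtain ⟨a, hpos, rfl⟩ := h
  set S := ({i | p ∣ a i} : Finset (Fin j))
  refine ⟨#S, ?_, ?_⟩
  · calc #S * p ^ k = ∑ i ∈ S, p ^ k := by rw [sum_const, smul_eq_mul]
      _ ≤ ∑ i ∈ S, a i ^ k := sum_le_sum fun i hi =>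
          Nat.pow_le_pow_left (Nat.le_of_dvd (hpos i) (mem_filter.mp hi).2) k
      _ ≤ ∑ i, a i ^ k := sum_le_sum_of_subset (subset_univ S)
  · have hcard : #S + #{i | ¬ p ∣ a i} = j := by
      simpa using card_filter_add_card_filter_not (s := univ) (fun i => p ∣ a i)
    push_cast
    simp_rw [ZMod.natCast_pow_eq_ite_of_sub_one_dvd hk hpk, sum_ite, sum_const_zero, sum_const,
      nsmul_eq_mul, mul_one, zero_add]
    rw [add_comm, ← Nat.cast_add, hcard]

lemma not_isRepr_of_lt_mul_pow {p n j k s : ℕ} (hp : p.Prime) (hk : k ≠ 0) (hpk : p - 1 ∣ k)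
    (hs : s < p) (hn : n < s * p ^ k) (hres : (n : ZMod p) + s = j) : ¬ IsRepr n j k := by
  intro h
  obtain ⟨s', hs'n, hres'⟩ := h.exists_mul_pow_le hp hk hpk
  have hlt : s' < s := Nat.lt_of_mul_lt_mul_right (hs'n.trans_lt hn)
  have hcast : (s' : ZMod p) = s := add_left_cancel (hres'.trans hres.symm)
  rw [ZMod.natCast_eq_natCast_iff', Nat.mod_eq_of_lt (hlt.trans hs), Nat.mod_eq_of_lt hs] at hcast
  omega

theorem sum_range_mul_pow_le_ncard_not_isRepr {p k : ℕ} (hp : p.Prime) (hk : k ≠ 0)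
    (hpk : p - 1 ∣ k) (j : ℕ) :
    (∑ s ∈ range p, s) * p ^ (k - 1) ≤ {n | n < p ^ (k + 1) ∧ ¬ IsRepr n j k}.ncard := by
  have : Fact p.Prime := ⟨hp⟩
  let B : ℕ → Finset ℕ := fun s => {n ∈ range (s * p ^ k) | (n : ZMod p) = j - s}
  have hpow : p ^ k = p ^ (k - 1) * p := by rw [← pow_succ, Nat.sub_add_cancel (by omega)]
  have hcard (s : ℕ) : #(B s) = s * p ^ (k - 1) := by
    simp only [B]
    rw [hpow, ← mul_assoc, card_filter_range_mul_natCast_eq]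
  have hdisj : (range p : Set ℕ).PairwiseDisjoint B := by
    intro s hs t ht hst
    refine disjoint_left.mpr fun n hns hnt => hst ?_
    have hst' := (mem_filter.mp hns).2.symm.trans (mem_filter.mp hnt).2
    rwa [sub_right_inj, ZMod.natCast_eq_natCast_iff', Nat.mod_eq_of_lt (mem_range.mp hs),
      Nat.mod_eq_of_lt (mem_range.mp ht)] at hst'
  have hsub : ↑((range p).biUnion B) ⊆ {n | n < p ^ (k + 1) ∧ ¬ IsRepr n j k} := by
    intro n hn
    simp only [coe_biUnion, coe_range, Set.mem_Iio, Set.mem_iUnion, coe_filter, mem_range,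
      Set.mem_ofPred_eq, B] at hn
    obtain ⟨s, hs, hlt, hres⟩ := hn
    refine ⟨?_, not_isRepr_of_lt_mul_pow hp hk hpk hs hlt (eq_sub_iff_add_eq.mp hres)⟩
    calc n < s * p ^ k := hlt
      _ ≤ p * p ^ k := Nat.mul_le_mul_right _ hs.le
      _ = p ^ (k + 1) := (pow_succ' p k).symm
  have hfin : {n | n < p ^ (k + 1) ∧ ¬ IsRepr n j k}.Finite :=
    (Set.finite_Iio _).subset fun n hn => hn.1
  calc (∑ s ∈ range p, s) * p ^ (k - 1) = #((range p).biUnion B) := by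
        rw [card_biUnion hdisj, sum_mul]; simp_rw [hcard]
    _ ≤ _ := by rw [← Set.ncard_coe_finset]; exact Set.ncard_le_ncard hsub hfin

theorem stmt_11_general (p j : ℕ) (hp : p.Prime) :
    p ^ (p - 1) * (p - 1) / 2 ≤
      {n : ℕ | n < p ^ p ∧ ¬ IsRepr n j (p - 1)}.ncard := by
  have hp2 := hp.two_le
  have hbound := sum_range_mul_pow_le_ncard_not_isRepr hp (by omega) dvd_rfl j
  rw [Nat.sub_add_cancel hp.one_le] at hbound
  have gauss : (∑ s ∈ range p, s) * p ^ (p - 1 - 1) * 2 = p ^ (p - 1) * (p - 1) := by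
    rw [mul_right_comm, sum_range_id_mul_two, mul_comm, ← mul_assoc, ← pow_succ,
      Nat.sub_add_cancel (by omega)]
  rw [← gauss, Nat.mul_div_cancel _ two_pos]
  exact hbound

/-- for every odd prime `p` and positive integer `j`, the number of
nonnegative integers `n < p^p` that are not the sum of exactly `j` positive
`(p-1)`-th powers is at least `p^(p-1)·(p-1)/2`. -/
theorem stmt_11 (p j : ℕ) (hp : p.Prime) (hodd : Odd p) (hj : 0 < j) :
    p ^ (p - 1) * (p - 1) / 2 ≤
      {n : ℕ | n < p ^ p ∧ ¬ IsRepr n j (p - 1)}.ncard :=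
  stmt_11_general p j hp
end

section
/- For every integer j ≥ 6, every integer n with n ≥ j and n − j ∉ {1, 2, 4, 5, 7, 10, 13} is the sum of exactly j positive squares. -/
lemma helper6 {n : ℕ} (h : ∃ a b c d e f : ℕ,
    0 < a ∧ 0 < b ∧ 0 < c ∧ 0 < d ∧ 0 < e ∧ 0 < f ∧
    a ^ 2 + b ^ 2 + c ^ 2 + d ^ 2 + e ^ 2 + f ^ 2 = n) : IsRepr n 6 2 := by
  obtain ⟨a, b, c, d, e, f, ha, hb, hc, hd, he, hf, hs⟩ := h
  refine ⟨![a, b, c, d, e, f], ?_, ?_⟩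
  · intro i; fin_cases i <;> simpa
  · simp [Fin.sum_univ_succ]
    linarith

lemma repr_add {m n i j : ℕ} (hm : IsRepr m i 2) (hn : IsRepr n j 2) :
    IsRepr (m + n) (i + j) 2 := by
  obtain ⟨a, ha, hsa⟩ := hm
  obtain ⟨b, hb, hsb⟩ := hn
  refine ⟨Fin.append a b, ?_, ?_⟩
  · intro x
    refine Fin.addCases (fun p => ?_) (fun p => ?_) x <;> simp [ha, hb]
  · rw [Fin.sum_univ_add]
    simp only [Fin.append_left, Fin.append_right, hsa, hsb]

lemma repr_one {a : ℕ} (ha : 0 < a) : IsRepr (a ^ 2) 1 2 := by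
  exact ⟨![a], by intro i; fin_cases i; simpa, by simp⟩

lemma repr_ones (j : ℕ) : IsRepr j j 2 := by
  exact ⟨fun _ => 1, fun _ => one_pos, by simp⟩

lemma chain {k s : ℕ} (h : s = 0 ∨ ∃ t, 1 ≤ t ∧ t ≤ k ∧ IsRepr s t 2) (a : ℕ) :
    s + a ^ 2 = 0 ∨ ∃ t, 1 ≤ t ∧ t ≤ k + 1 ∧ IsRepr (s + a ^ 2) t 2 := by
  rcases Nat.eq_zero_or_pos a with rfl | ha
  · rcases h with rfl | ⟨t, h1, h2, h3⟩
    · left; simp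
    · right; exact ⟨t, h1, h2.trans (Nat.le_succ k), by simpa using h3⟩
  · right
    rcases h with rfl | ⟨t, h1, h2, h3⟩
    · exact ⟨1, le_refl 1, by omega, by simpa using repr_one ha⟩
    · exact ⟨t + 1, by omega, by omega, repr_add h3 (repr_one ha)⟩

lemma lagrange_pos {s : ℕ} (hs : 0 < s) : ∃ t, 1 ≤ t ∧ t ≤ 4 ∧ IsRepr s t 2 := by
  obtain ⟨a, b, c, d, h⟩ := Nat.sum_four_squares s
  have h0 : (0 : ℕ) = 0 ∨ ∃ t, 1 ≤ t ∧ t ≤ 0 ∧ IsRepr 0 t 2 := Or.inl rfl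
  have := chain (chain (chain (chain h0 a) b) c) d
  rw [zero_add, h] at this
  rcases this with h' | h'
  · omega
  · exact h'

lemma big {n : ℕ} (h : 169 ≤ n) : IsRepr n 6 2 := by
  rcases eq_or_lt_of_le h with rfl | h'
  · exact helper6 ⟨9, 7, 5, 3, 2, 1, by norm_num⟩
  · have hs : 0 < n - 169 := by omega
    obtain ⟨t, h1, h4, hr⟩ := lagrange_pos hs
    have h169 : IsRepr 169 (6 - t) 2 := by
      interval_cases t
      · exact ⟨![10, 6, 4, 4, 1], by decide, by decide⟩
      · exact ⟨![10, 8, 2, 1], by decide, by decide⟩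
      · exact ⟨![12, 4, 3], by decide, by decide⟩
      · exact ⟨![12, 5], by decide, by decide⟩
    have h2 := repr_add hr h169
    rw [show n - 169 + 169 = n by omega, show t + (6 - t) = 6 by omega] at h2
    exact h2

lemma small {n : ℕ} (h6 : 6 ≤ n) (h168 : n ≤ 168)
    (h : n - 6 ∉ ({1, 2, 4, 5, 7, 10, 13} : Finset ℕ)) : IsRepr n 6 2 := by
  interval_cases n
  · exact helper6 ⟨1,1,1,1,1,1, by norm_num⟩
  · exact absurd (by decide) h
  · exact absurd (by decide) h
  · exact helper6 ⟨1,1,1,1,1,2, by norm_num⟩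
  · exact absurd (by decide) h
  · exact absurd (by decide) h
  · exact helper6 ⟨1,1,1,1,2,2, by norm_num⟩
  · exact absurd (by decide) h
  · exact helper6 ⟨1,1,1,1,1,3, by norm_num⟩
  · exact helper6 ⟨1,1,1,2,2,2, by norm_num⟩
  · exact absurd (by decide) h
  · exact helper6 ⟨1,1,1,1,2,3, by norm_num⟩
  · exact helper6 ⟨1,1,2,2,2,2, by norm_num⟩
  · exact absurd (by decide) h
  · exact helper6 ⟨1,1,1,2,2,3, by norm_num⟩
  · exact helper6 ⟨1,1,1,1,1,4, by norm_num⟩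
  · exact helper6 ⟨1,1,1,1,3,3, by norm_num⟩
  · exact helper6 ⟨1,1,2,2,2,3, by norm_num⟩
  · exact helper6 ⟨1,1,1,1,2,4, by norm_num⟩
  · exact helper6 ⟨1,1,1,2,3,3, by norm_num⟩
  · exact helper6 ⟨1,2,2,2,2,3, by norm_num⟩
  · exact helper6 ⟨1,1,1,2,2,4, by norm_num⟩
  · exact helper6 ⟨1,1,2,2,3,3, by norm_num⟩
  · exact helper6 ⟨1,1,1,1,3,4, by norm_num⟩
  · exact helper6 ⟨1,1,1,1,1,5, by norm_num⟩
  · exact helper6 ⟨1,2,2,2,3,3, by norm_num⟩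
  · exact helper6 ⟨1,1,1,2,3,4, by norm_num⟩
  · exact helper6 ⟨1,1,1,1,2,5, by norm_num⟩
  · exact helper6 ⟨2,2,2,2,3,3, by norm_num⟩
  · exact helper6 ⟨1,1,2,2,3,4, by norm_num⟩
  · exact helper6 ⟨1,1,1,1,4,4, by norm_num⟩
  · exact helper6 ⟨1,1,1,3,3,4, by norm_num⟩
  · exact helper6 ⟨1,1,1,1,3,5, by norm_num⟩
  · exact helper6 ⟨1,1,1,2,4,4, by norm_num⟩
  · exact helper6 ⟨1,1,2,3,3,4, by norm_num⟩
  · exact helper6 ⟨1,1,1,1,1,6, by norm_num⟩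
  · exact helper6 ⟨1,1,2,2,4,4, by norm_num⟩
  · exact helper6 ⟨1,2,2,3,3,4, by norm_num⟩
  · exact helper6 ⟨1,1,1,1,2,6, by norm_num⟩
  · exact helper6 ⟨1,1,1,1,4,5, by norm_num⟩
  · exact helper6 ⟨1,1,1,3,3,5, by norm_num⟩
  · exact helper6 ⟨1,1,1,2,2,6, by norm_num⟩
  · exact helper6 ⟨1,1,1,2,4,5, by norm_num⟩
  · exact helper6 ⟨1,1,1,1,3,6, by norm_num⟩
  · exact helper6 ⟨1,1,2,2,2,6, by norm_num⟩
  · exact helper6 ⟨1,1,1,4,4,4, by norm_num⟩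
  · exact helper6 ⟨1,1,1,2,3,6, by norm_num⟩
  · exact helper6 ⟨1,1,1,3,4,5, by norm_num⟩
  · exact helper6 ⟨1,1,1,1,1,7, by norm_num⟩
  · exact helper6 ⟨1,1,2,2,3,6, by norm_num⟩
  · exact helper6 ⟨1,1,1,1,4,6, by norm_num⟩
  · exact helper6 ⟨1,1,1,1,2,7, by norm_num⟩
  · exact helper6 ⟨1,2,2,2,3,6, by norm_num⟩
  · exact helper6 ⟨1,1,1,2,4,6, by norm_num⟩
  · exact helper6 ⟨1,1,1,2,2,7, by norm_num⟩
  · exact helper6 ⟨1,1,3,3,4,5, by norm_num⟩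
  · exact helper6 ⟨1,1,1,1,3,7, by norm_num⟩
  · exact helper6 ⟨1,1,2,2,2,7, by norm_num⟩
  · exact helper6 ⟨1,1,1,3,4,6, by norm_num⟩
  · exact helper6 ⟨1,1,1,1,5,6, by norm_num⟩
  · exact helper6 ⟨1,1,4,4,4,4, by norm_num⟩
  · exact helper6 ⟨1,1,2,3,4,6, by norm_num⟩
  · exact helper6 ⟨1,1,1,2,5,6, by norm_num⟩
  · exact helper6 ⟨1,1,1,1,1,8, by norm_num⟩
  · exact helper6 ⟨1,1,1,3,3,7, by norm_num⟩
  · exact helper6 ⟨1,1,1,4,4,6, by norm_num⟩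
  · exact helper6 ⟨1,1,1,1,2,8, by norm_num⟩
  · exact helper6 ⟨1,1,1,3,5,6, by norm_num⟩
  · exact helper6 ⟨1,1,2,4,4,6, by norm_num⟩
  · exact helper6 ⟨1,1,1,2,2,8, by norm_num⟩
  · exact helper6 ⟨1,1,1,1,6,6, by norm_num⟩
  · exact helper6 ⟨1,1,1,1,3,8, by norm_num⟩
  · exact helper6 ⟨1,1,1,1,5,7, by norm_num⟩
  · exact helper6 ⟨1,1,1,2,6,6, by norm_num⟩
  · exact helper6 ⟨1,1,1,2,3,8, by norm_num⟩
  · exact helper6 ⟨1,1,1,2,5,7, by norm_num⟩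
  · exact helper6 ⟨1,1,2,2,6,6, by norm_num⟩
  · exact helper6 ⟨1,1,2,2,3,8, by norm_num⟩
  · exact helper6 ⟨1,1,1,1,4,8, by norm_num⟩
  · exact helper6 ⟨1,1,1,3,3,8, by norm_num⟩
  · exact helper6 ⟨1,1,1,1,1,9, by norm_num⟩
  · exact helper6 ⟨1,1,1,2,4,8, by norm_num⟩
  · exact helper6 ⟨1,1,2,3,3,8, by norm_num⟩
  · exact helper6 ⟨1,1,1,1,2,9, by norm_num⟩
  · exact helper6 ⟨1,1,2,2,4,8, by norm_num⟩
  · exact helper6 ⟨1,1,1,4,6,6, by norm_num⟩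
  · exact helper6 ⟨1,1,1,2,2,9, by norm_num⟩
  · exact helper6 ⟨1,1,1,1,5,8, by norm_num⟩
  · exact helper6 ⟨1,1,1,1,3,9, by norm_num⟩
  · exact helper6 ⟨1,1,2,2,2,9, by norm_num⟩
  · exact helper6 ⟨1,1,1,2,5,8, by norm_num⟩
  · exact helper6 ⟨1,1,1,2,3,9, by norm_num⟩
  · exact helper6 ⟨1,2,2,2,2,9, by norm_num⟩
  · exact helper6 ⟨1,1,1,4,4,8, by norm_num⟩
  · exact helper6 ⟨1,1,1,5,6,6, by norm_num⟩
  · exact helper6 ⟨1,1,1,1,4,9, by norm_num⟩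
  · exact helper6 ⟨1,1,1,1,7,7, by norm_num⟩
  · exact helper6 ⟨1,1,2,5,6,6, by norm_num⟩
  · exact helper6 ⟨1,1,1,1,6,8, by norm_num⟩
  · exact helper6 ⟨1,1,1,1,1,10, by norm_num⟩
  · exact helper6 ⟨1,1,4,4,6,6, by norm_num⟩
  · exact helper6 ⟨1,1,1,2,6,8, by norm_num⟩
  · exact helper6 ⟨1,1,1,1,2,10, by norm_num⟩
  · exact helper6 ⟨1,1,1,3,4,9, by norm_num⟩
  · exact helper6 ⟨1,1,1,1,5,9, by norm_num⟩
  · exact helper6 ⟨1,1,1,2,2,10, by norm_num⟩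
  · exact helper6 ⟨1,1,1,3,6,8, by norm_num⟩
  · exact helper6 ⟨1,1,1,1,3,10, by norm_num⟩
  · exact helper6 ⟨1,1,2,2,2,10, by norm_num⟩
  · exact helper6 ⟨1,1,2,3,6,8, by norm_num⟩
  · exact helper6 ⟨1,1,1,2,3,10, by norm_num⟩
  · exact helper6 ⟨1,1,1,1,7,8, by norm_num⟩
  · exact helper6 ⟨1,1,1,3,5,9, by norm_num⟩
  · exact helper6 ⟨1,1,1,4,6,8, by norm_num⟩
  · exact helper6 ⟨1,1,1,1,4,10, by norm_num⟩
  · exact helper6 ⟨1,1,1,1,6,9, by norm_num⟩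
  · exact helper6 ⟨1,1,2,4,6,8, by norm_num⟩
  · exact helper6 ⟨1,1,1,2,4,10, by norm_num⟩
  · exact helper6 ⟨1,1,1,2,6,9, by norm_num⟩
  · exact helper6 ⟨1,1,1,3,7,8, by norm_num⟩
  · exact helper6 ⟨1,1,1,1,1,11, by norm_num⟩
  · exact helper6 ⟨1,1,2,2,6,9, by norm_num⟩
  · exact helper6 ⟨1,1,1,3,4,10, by norm_num⟩
  · exact helper6 ⟨1,1,1,1,2,11, by norm_num⟩
  · exact helper6 ⟨1,2,2,2,6,9, by norm_num⟩
  · exact helper6 ⟨1,1,2,3,4,10, by norm_num⟩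
  · exact helper6 ⟨1,1,1,1,8,8, by norm_num⟩
  · exact helper6 ⟨1,1,3,3,7,8, by norm_num⟩
  · exact helper6 ⟨1,1,1,1,3,11, by norm_num⟩
  · exact helper6 ⟨1,1,1,2,8,8, by norm_num⟩
  · exact helper6 ⟨1,1,1,4,6,9, by norm_num⟩
  · exact helper6 ⟨1,1,1,2,3,11, by norm_num⟩
  · exact helper6 ⟨1,1,2,2,8,8, by norm_num⟩
  · exact helper6 ⟨1,1,1,6,6,8, by norm_num⟩
  · exact helper6 ⟨1,1,1,1,6,10, by norm_num⟩
  · exact helper6 ⟨1,1,1,1,4,11, by norm_num⟩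
  · exact helper6 ⟨1,1,1,3,3,11, by norm_num⟩
  · exact helper6 ⟨1,1,1,2,6,10, by norm_num⟩
  · exact helper6 ⟨1,1,1,2,4,11, by norm_num⟩
  · exact helper6 ⟨1,1,1,5,6,9, by norm_num⟩
  · exact helper6 ⟨1,1,2,2,6,10, by norm_num⟩
  · exact helper6 ⟨1,1,1,4,8,8, by norm_num⟩
  · exact helper6 ⟨1,1,1,3,6,10, by norm_num⟩
  · exact helper6 ⟨1,1,1,1,1,12, by norm_num⟩
  · exact helper6 ⟨1,1,1,1,5,11, by norm_num⟩
  · exact helper6 ⟨1,1,2,3,6,10, by norm_num⟩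
  · exact helper6 ⟨1,1,1,1,2,12, by norm_num⟩
  · exact helper6 ⟨1,1,1,1,7,10, by norm_num⟩
  · exact helper6 ⟨1,1,4,6,6,8, by norm_num⟩
  · exact helper6 ⟨1,1,1,2,2,12, by norm_num⟩
  · exact helper6 ⟨1,1,1,2,7,10, by norm_num⟩
  · exact helper6 ⟨1,1,1,1,3,12, by norm_num⟩
  · exact helper6 ⟨1,1,1,3,5,11, by norm_num⟩
  · exact helper6 ⟨1,1,2,2,7,10, by norm_num⟩
  · exact helper6 ⟨1,1,1,2,3,12, by norm_num⟩
  · exact helper6 ⟨1,1,1,1,6,11, by norm_num⟩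
  · exact helper6 ⟨1,1,4,4,8,8, by norm_num⟩
  · exact helper6 ⟨1,1,2,2,3,12, by norm_num⟩
  · exact helper6 ⟨1,1,1,1,4,12, by norm_num⟩
  · exact helper6 ⟨1,1,1,3,3,12, by norm_num⟩
  · exact helper6 ⟨1,1,1,1,9,9, by norm_num⟩
  · exact helper6 ⟨1,1,1,2,4,12, by norm_num⟩
  · exact helper6 ⟨1,1,1,1,8,10, by norm_num⟩

/-- for every `j ≥ 6`, every integer `n ≥ j` with
`n - j ∉ {1, 2, 4, 5, 7, 10, 13}` is the sum of exactly `j` positive squares. -/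
theorem stmt_14 :
    ∀ j : ℕ, 6 ≤ j → ∀ n : ℕ, j ≤ n →
      n - j ∉ ({1, 2, 4, 5, 7, 10, 13} : Finset ℕ) → IsRepr n j 2 := by
  intro j hj n hn hbad
  have key : IsRepr (n - j + 6) 6 2 := by
    rcases le_or_gt 169 (n - j + 6) with h | h
    · exact big h
    · apply small (by omega) (by omega)
      rw [show n - j + 6 - 6 = n - j by omega]
      exact hbad
  have h2 := repr_add key (repr_ones (j - 6))
  rw [show n - j + 6 + (j - 6) = n by omega, show 6 + (j - 6) = j by omega] at h2
  exact h2
end
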